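/- Let π : Σ* → G be a choice of generators for a group G, let # be a letter not in Σ, let W = {w ∈ Σ* : π(w) = 1} be the word problem of G, and let M = {u#v#w : u, v, w ∈ Σ*, π(u)π(v)π(w) = 1} be the multiplication table corresponding to the combing R = Σ*. Then M is a regular language over Σ ∪ {#} if and only if W is a regular language over Σ. -/

import Mathlib

/-- The image in `G` of a word over the generating alphabet, for the monoid homomorphism
`Σ* → G` determined by the letter map `φ`. -/
def wordProd {S G : Type} [Group G] (φ : S → G) (w : List S) : G :=
  (w.map φ).prod

/-- The word metric `d(g,h) = min {|w| : π(w) = g⁻¹h}` on `G`. -/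
noncomputable def wdist {S G : Type} [Group G] (φ : S → G) (g h : G) : ℕ :=
  sInf {n : ℕ | ∃ w : List S, wordProd φ w = g⁻¹ * h ∧ w.length = n}

/-- The set of points of the path determined by the word `w` based at `g`. -/
def pathPoints {S G : Type} [Group G] (φ : S → G) (g : G) (w : List S) : Set G :=
  {x | ∃ i ≤ w.length, x = g * wordProd φ (w.take i)}

/-- A combing: a language projecting onto `G`. -/
def IsCombing {S G : Type} [Group G] (φ : S → G) (R : Language S) : Prop :=
  ∀ g : G, ∃ w ∈ R, wordProd φ w = g

/-- The word `u#v#w` over `Σ ∪ {#}`, where the letter `#` is modelled by `none`. -/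
def hashWord {S : Type} (u v w : List S) : List (Option S) :=
  u.map some ++ [none] ++ v.map some ++ [none] ++ w.map some

/-- The multiplication table `{u#v#w : u,v,w ∈ R, π(u)π(v)π(w) = 1}` determined by
the combing `R`. -/
def multTable {S G : Type} [Group G] (φ : S → G) (R : Language S) : Language (Option S) :=
  {z | ∃ u ∈ R, ∃ v ∈ R, ∃ w ∈ R,
    wordProd φ u * wordProd φ v * wordProd φ w = 1 ∧ z = hashWord u v w}

/-!
Both directions are closure properties of regular languages. Erasing `#` is a monoid
homomorphism `(Σ ∪ {#})* → Σ*`, and `M` is the set of words with exactly two `#`s whose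
image lies in `W`: an intersection of a counting language with an inverse homomorphic image
of `W`. Conversely `w ∈ W` iff `w##` lies in `M`, so `W` is an inverse image of `M` under a
letter map followed by the right quotient by the fixed word `##`.
-/

namespace Language

variable {α β : Type*}

theorem IsRegular.preimage_map {L : Language β} (h : L.IsRegular) (f : α → β) :
    IsRegular ({x | x.map f ∈ L} : Language α) := by
  obtain ⟨σ, _, M, rfl⟩ := h
  exact ⟨σ, inferInstance, M.comap f, M.accepts_comap f⟩

theorem IsRegular.preimage_flatMap {L : Language β} (h : L.IsRegular) (f : α → List β) :
    IsRegular ({x | x.flatMap f ∈ L} : Language α) := by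
  obtain ⟨σ, _, M, rfl⟩ := h
  let M' : DFA α σ := ⟨fun s a => M.evalFrom s (f a), M.start, M.accept⟩
  have hM' : ∀ s x, M'.evalFrom s x = M.evalFrom s (x.flatMap f) := by
    intro s x
    induction x generalizing s with
    | nil => rfl
    | cons a x ih => rw [DFA.evalFrom_cons, ih, List.flatMap_cons, DFA.evalFrom_of_append]
  exact ⟨σ, inferInstance, M', Set.ext fun x =>
    show M'.eval x ∈ M.accept ↔ M.eval (x.flatMap f) ∈ M.accept by rw [DFA.eval, hM']; rfl⟩

theorem IsRegular.preimage_append_right {L : Language α} (h : L.IsRegular) (y : List α) :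
    IsRegular ({x | x ++ y ∈ L} : Language α) := by
  obtain ⟨σ, _, M, rfl⟩ := h
  exact ⟨σ, inferInstance, ⟨M.step, M.start, {s | M.evalFrom s y ∈ M.accept}⟩, Set.ext fun x =>
    show M.evalFrom (M.eval x) y ∈ M.accept ↔ M.eval (x ++ y) ∈ M.accept by
      rw [DFA.eval, DFA.evalFrom_of_append]⟩

-- The left quotient by `x` only depends on `min (x.countP p) (n + 1)`.
theorem isRegular_setOf_countP_eq (p : α → Bool) (n : ℕ) :
    IsRegular ({x | x.countP p = n} : Language α) := by
  refine IsRegular.of_finite_range_leftQuotient <|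
    (Set.finite_range fun k : Fin (n + 2) => ({y | k + y.countP p = n} : Language α)).subset ?_
  rintro _ ⟨x, rfl⟩
  refine ⟨⟨min (x.countP p) (n + 1), by omega⟩, Set.ext fun y => ?_⟩
  change min (x.countP p) (n + 1) + y.countP p = n ↔ (x ++ y).countP p = n
  rw [List.countP_append]
  omega

end Language

namespace List

variable {α : Type*}

@[simp]
theorem countP_isNone_map_some (u : List α) : (u.map some).countP Option.isNone = 0 :=
  countP_eq_zero.mpr (by simp)

@[simp]
theorem reduceOption_map_some (u : List α) : (u.map some).reduceOption = u := by
  simp [reduceOption, filterMap_map]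

theorem exists_eq_map_some_of_countP_isNone_eq_zero {z : List (Option α)}
    (h : z.countP Option.isNone = 0) : ∃ u : List α, z = u.map some := by
  induction z with
  | nil => exact ⟨[], rfl⟩
  | cons a z ih =>
    cases a with
    | none => simp at h
    | some b =>
      obtain ⟨u, rfl⟩ := ih (by simpa using h)
      exact ⟨b :: u, rfl⟩

theorem exists_eq_map_some_append_none_cons {z : List (Option α)}
    (h : 0 < z.countP Option.isNone) :
    ∃ (u : List α) (t : List (Option α)), z = u.map some ++ none :: t := by
  induction z with
  | nil => simp at h
  | cons a z ih =>
    cases a with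
    | none => exact ⟨[], z, rfl⟩
    | some b =>
      obtain ⟨u, t, rfl⟩ := ih (by simpa using h)
      exact ⟨b :: u, t, rfl⟩

end List

theorem exists_eq_hashWord_of_countP_isNone_eq_two {S : Type} {z : List (Option S)}
    (h : z.countP Option.isNone = 2) : ∃ u v w : List S, z = hashWord u v w := by
  obtain ⟨u, z, rfl⟩ := List.exists_eq_map_some_append_none_cons (by omega : 0 < z.countP _)
  rw [List.countP_append, List.countP_isNone_map_some, List.countP_cons_of_pos rfl] at h
  obtain ⟨v, z, rfl⟩ := List.exists_eq_map_some_append_none_cons (by omega : 0 < z.countP _)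
  rw [List.countP_append, List.countP_isNone_map_some, List.countP_cons_of_pos rfl] at h
  obtain ⟨w, rfl⟩ := List.exists_eq_map_some_of_countP_isNone_eq_zero (by omega : z.countP _ = 0)
  exact ⟨u, v, w, by simp [hashWord]⟩

theorem countP_isNone_hashWord {S : Type} (u v w : List S) :
    (hashWord u v w).countP Option.isNone = 2 := by
  simp [hashWord, -List.countP_map]

theorem reduceOption_hashWord {S : Type} (u v w : List S) :
    (hashWord u v w).reduceOption = u ++ v ++ w := by
  simp [hashWord, List.reduceOption_append]

theorem wordProd_append {S G : Type} [Group G] (φ : S → G) (u v : List S) :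
    wordProd φ (u ++ v) = wordProd φ u * wordProd φ v := by
  simp [wordProd]

theorem multTable_univ_eq {S G : Type} [Group G] (φ : S → G) :
    multTable φ Set.univ =
      {z | z.countP Option.isNone = 2} ⊓ {z | wordProd φ z.reduceOption = 1} := by
  ext z
  constructor
  · rintro ⟨u, -, v, -, w, -, huvw, rfl⟩
    exact ⟨countP_isNone_hashWord u v w, show wordProd φ (hashWord u v w).reduceOption = 1 by
      rwa [reduceOption_hashWord, wordProd_append, wordProd_append]⟩
  · rintro ⟨hz, hprod⟩
    obtain ⟨u, v, w, rfl⟩ := exists_eq_hashWord_of_countP_isNone_eq_two hz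
    refine ⟨u, trivial, v, trivial, w, trivial, ?_, rfl⟩
    change wordProd φ (hashWord u v w).reduceOption = 1 at hprod
    rwa [reduceOption_hashWord, wordProd_append, wordProd_append] at hprod

theorem multTable_regular_iff_wordProblem_regular_general {S G : Type} [Group G]
    (φ : S → G) :
    (multTable φ (Set.univ : Language S)).IsRegular ↔
      Language.IsRegular {w : List S | wordProd φ w = 1} := by
  rw [multTable_univ_eq]
  constructor
  · intro hM
    refine (congrArg Language.IsRegular (Set.ext fun w => ?_)).mp
      ((hM.preimage_append_right [none, none]).preimage_map some)
    change (w.map some ++ [none, none]).countP Option.isNone = 2 ∧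
      wordProd φ (w.map some ++ [none, none]).reduceOption = 1 ↔ wordProd φ w = 1
    simp [List.reduceOption_append, -List.countP_map]
  · intro hW
    refine (Language.isRegular_setOf_countP_eq _ 2).inf ?_
    refine (congrArg Language.IsRegular (Set.ext fun z => ?_)).mp
      (hW.preimage_flatMap Option.toList)
    change wordProd φ (z.flatMap Option.toList) = 1 ↔ wordProd φ z.reduceOption = 1
    rw [List.reduceOption, List.filterMap_eq_flatMap_toList]
    rfl

/-- The multiplication table corresponding to the combing `R = Σ*` is
regular iff the word problem `W = {w : π(w) = 1}` is regular. -/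
theorem multTable_regular_iff_wordProblem_regular {S G : Type} [Fintype S] [Group G]
    (inv : S → S) (hinv_inv : ∀ a, inv (inv a) = a) (hinv_ne : ∀ a, inv a ≠ a)
    (φ : S → G) (hsurj : Function.Surjective (wordProd φ))
    (hφinv : ∀ a, φ (inv a) = (φ a)⁻¹) :
    (multTable φ (Set.univ : Language S)).IsRegular ↔
      Language.IsRegular {w : List S | wordProd φ w = 1} :=
  multTable_regular_iff_wordProblem_regular_general φ
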